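/- arXiv:math/9308206 — 3 statements merged into one kernel-verified Lean document; each statement's English description precedes it below -/
import Mathlib

section
/- For every ε > 0 there is a δ > 0 such that: whenever A and B are bounded linear operators on a complex Banach space satisfying ‖sin A‖ ≤ 1 − δ, ‖sin B‖ ≤ 1, Arcsin(sin A) = A, Arcsin(sin B) = B, and ‖sin A − sin B‖ ≤ δ, then ‖A − B‖ ≤ ε. The choice of δ is uniform over all complex Banach spaces. -/
open scoped ENNReal NNReal

noncomputable section

/-- `sin A := ∑_{j≥0} ((−1)^j/(2j+1)!) A^{2j+1}` for a bounded operator `A`. -/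
def opSin {E : Type*} [NormedAddCommGroup E] [NormedSpace ℂ E]
    (A : E →L[ℂ] E) : E →L[ℂ] E :=
  ∑' j : ℕ, ((-1 : ℂ) ^ j / (Nat.factorial (2 * j + 1) : ℂ)) • A ^ (2 * j + 1)

/-- The Maclaurin coefficients of arcsin: `c_j = (2j)! / (4^j (j!)^2 (2j+1)) ≥ 0`. -/
def arcsinCoeff (j : ℕ) : ℝ :=
  (Nat.factorial (2 * j) : ℝ) / (4 ^ j * (Nat.factorial j : ℝ) ^ 2 * (2 * j + 1))

/-- `Arcsin v := ∑_{j≥0} c_j v^{2j+1}` for a bounded operator `v` (absolutely convergent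
when `‖v‖ ≤ 1`). -/
def opArcsin {E : Type*} [NormedAddCommGroup E] [NormedSpace ℂ E]
    (v : E →L[ℂ] E) : E →L[ℂ] E :=
  ∑' j : ℕ, (arcsinCoeff j : ℂ) • v ^ (2 * j + 1)

/-! Since `sin A` and `sin B` lie in the closed unit ball and `Arcsin` recovers `A` and `B`,
it suffices that `v ↦ ∑ c_j v^(2j+1)` is uniformly continuous on the closed unit ball of every
Banach algebra, with a modulus independent of the algebra. Split the series at `N`: the tail
is at most `2 ∑_{j ≥ N} c_j`, small since `∑ c_j` converges, and the head is Lipschitz with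
constant `∑_{j < N} (2j+1) c_j` because `‖u^n - v^n‖ ≤ n ‖u - v‖` on the unit ball.
Summability of `c_j` comes from telescoping: `c_j ≤ 2 (w_j - w_{j+1})` for the decreasing
sequence `w_j = binom(2j, j) / 4^j`. -/

lemma arcsinCoeff_nonneg (j : ℕ) : 0 ≤ arcsinCoeff j := by
  unfold arcsinCoeff; positivity

lemma arcsinCoeff_eq (j : ℕ) :
    arcsinCoeff j = (Nat.centralBinom j : ℝ) / 4 ^ j / (2 * j + 1) := by
  rw [arcsinCoeff, Nat.centralBinom_eq_two_mul_choose, Nat.cast_choose ℝ (by omega),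
    show 2 * j - j = j by omega]
  field_simp

lemma centralBinom_div_four_pow_succ (j : ℕ) :
    (Nat.centralBinom (j + 1) : ℝ) / 4 ^ (j + 1)
      = (Nat.centralBinom j : ℝ) / 4 ^ j * ((2 * j + 1) / (2 * j + 2)) := by
  have h : ((j + 1 : ℕ) : ℝ) * Nat.centralBinom (j + 1)
      = 2 * (2 * j + 1) * Nat.centralBinom j := mod_cast Nat.succ_mul_centralBinom_succ j
  push_cast at h
  field_simp
  rw [pow_succ]
  linear_combination (4 ^ j * 2 : ℝ) * h

lemma arcsinCoeff_le_two_mul_sub (j : ℕ) :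
    arcsinCoeff j ≤ 2 * ((Nat.centralBinom j : ℝ) / 4 ^ j
      - (Nat.centralBinom (j + 1) : ℝ) / 4 ^ (j + 1)) := by
  rw [arcsinCoeff_eq, centralBinom_div_four_pow_succ]
  have hw : 0 ≤ (Nat.centralBinom j : ℝ) / 4 ^ j := by positivity
  have hj : (0 : ℝ) ≤ j := j.cast_nonneg
  rw [div_le_iff₀ (by positivity)]
  field_simp
  nlinarith [mul_nonneg hw hj]

lemma summable_arcsinCoeff : Summable arcsinCoeff := by
  set w : ℕ → ℝ := fun j => (Nat.centralBinom j : ℝ) / 4 ^ j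
  have hw_nonneg : ∀ j, 0 ≤ w j := fun j => by positivity
  have hw_antitone : ∀ j, w (j + 1) ≤ w j := fun j => by
    simp only [w, centralBinom_div_four_pow_succ]
    exact mul_le_of_le_one_right (hw_nonneg j) ((div_le_one₀ (by positivity)).2 (by linarith))
  have htelescope : Summable fun j => w j - w (j + 1) := by
    refine summable_of_sum_range_le (c := w 0) (fun j => sub_nonneg.2 (hw_antitone j))
      fun n => ?_
    rw [Finset.sum_range_sub']
    linarith [hw_nonneg n]
  exact .of_nonneg_of_le arcsinCoeff_nonneg arcsinCoeff_le_two_mul_sub (htelescope.mul_left 2)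

section PowerBounds

variable {R : Type*} [NormedRing R] {u v : R}

lemma norm_pow_succ_le_one (hu : ‖u‖ ≤ 1) (n : ℕ) : ‖u ^ (n + 1)‖ ≤ 1 :=
  (norm_pow_le' u n.succ_pos).trans (pow_le_one₀ (norm_nonneg u) hu)

lemma norm_pow_succ_sub_pow_succ_le (hu : ‖u‖ ≤ 1) (hv : ‖v‖ ≤ 1) (n : ℕ) :
    ‖u ^ (n + 1) - v ^ (n + 1)‖ ≤ (n + 1) * ‖u - v‖ := by
  induction n with
  | zero => simp
  | succ n ih =>
    have hsplit : u ^ (n + 2) - v ^ (n + 2)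
        = u ^ (n + 1) * (u - v) + (u ^ (n + 1) - v ^ (n + 1)) * v := by
      rw [pow_succ u (n + 1), pow_succ v (n + 1)]; noncomm_ring
    calc ‖u ^ (n + 2) - v ^ (n + 2)‖
        ≤ ‖u ^ (n + 1)‖ * ‖u - v‖ + ‖u ^ (n + 1) - v ^ (n + 1)‖ * ‖v‖ := by
          rw [hsplit]; exact norm_add_le_of_le (norm_mul_le _ _) (norm_mul_le _ _)
      _ ≤ 1 * ‖u - v‖ + ((n + 1) * ‖u - v‖) * 1 := by
          gcongr
          exact norm_pow_succ_le_one hu n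
      _ = (↑(n + 1) + 1) * ‖u - v‖ := by push_cast; ring

end PowerBounds

section OddPowerSeries

variable {R : Type*} [NormedRing R] [NormedAlgebra ℂ R] [CompleteSpace R]
  {a : ℕ → ℝ} {u v : R}

def oddPowerSeries (a : ℕ → ℝ) (u : R) : R := ∑' j, (a j : ℂ) • u ^ (2 * j + 1)

lemma summable_oddPowerSeries (ha_nonneg : ∀ j, 0 ≤ a j) (ha : Summable a) (hu : ‖u‖ ≤ 1) :
    Summable fun j => (a j : ℂ) • u ^ (2 * j + 1) := by
  refine .of_norm_bounded ha fun j => ?_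
  rw [norm_smul, Complex.norm_of_nonneg (ha_nonneg j)]
  exact mul_le_of_le_one_right (ha_nonneg j) (norm_pow_succ_le_one hu _)

lemma oddPowerSeries_sub (ha_nonneg : ∀ j, 0 ≤ a j) (ha : Summable a)
    (hu : ‖u‖ ≤ 1) (hv : ‖v‖ ≤ 1) :
    oddPowerSeries a u - oddPowerSeries a v
      = ∑' j, (a j : ℂ) • (u ^ (2 * j + 1) - v ^ (2 * j + 1)) := by
  simp only [oddPowerSeries, smul_sub]
  exact ((summable_oddPowerSeries ha_nonneg ha hu).tsum_sub
    (summable_oddPowerSeries ha_nonneg ha hv)).symm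

lemma norm_oddPowerSeries_sub_le (ha_nonneg : ∀ j, 0 ≤ a j) (ha : Summable a)
    (hu : ‖u‖ ≤ 1) (hv : ‖v‖ ≤ 1) (N : ℕ) :
    ‖oddPowerSeries a u - oddPowerSeries a v‖
      ≤ (∑ j ∈ Finset.range N, a j * (2 * j + 1)) * ‖u - v‖ + 2 * ∑' j, a (j + N) := by
  set t : ℕ → ℝ := fun j => a j * ‖u ^ (2 * j + 1) - v ^ (2 * j + 1)‖
  have ht_le_two : ∀ j, t j ≤ 2 * a j := fun j => by
    have : ‖u ^ (2 * j + 1) - v ^ (2 * j + 1)‖ ≤ 2 := by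
      linarith [norm_sub_le (u ^ (2 * j + 1)) (v ^ (2 * j + 1)),
        norm_pow_succ_le_one hu (2 * j), norm_pow_succ_le_one hv (2 * j)]
    nlinarith [ha_nonneg j]
  have ht_le_lipschitz : ∀ j, t j ≤ a j * (2 * j + 1) * ‖u - v‖ := fun j => by
    have := norm_pow_succ_sub_pow_succ_le hu hv (2 * j)
    push_cast at this
    rw [mul_assoc]
    exact mul_le_mul_of_nonneg_left this (ha_nonneg j)
  have ht_nonneg : ∀ j, 0 ≤ t j := fun j => mul_nonneg (ha_nonneg j) (norm_nonneg _)
  have ht : Summable t := .of_nonneg_of_le ht_nonneg ht_le_two (ha.mul_left 2)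
  calc ‖oddPowerSeries a u - oddPowerSeries a v‖
      ≤ ∑' j, t j := by
        rw [oddPowerSeries_sub ha_nonneg ha hu hv]
        refine tsum_of_norm_bounded ht.hasSum fun j => ?_
        rw [norm_smul, Complex.norm_of_nonneg (ha_nonneg j)]
    _ = ∑ j ∈ Finset.range N, t j + ∑' j, t (j + N) := (ht.sum_add_tsum_nat_add N).symm
    _ ≤ ∑ j ∈ Finset.range N, a j * (2 * j + 1) * ‖u - v‖ + ∑' j, 2 * a (j + N) := by
        gcongr with j
        · exact ht_le_lipschitz j
        · exact (summable_nat_add_iff N).2 ht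
        · exact ((summable_nat_add_iff N).2 ha).mul_left 2
        · exact ht_le_two _
    _ = _ := by rw [Finset.sum_mul, tsum_mul_left]

end OddPowerSeries

theorem exists_pos_norm_oddPowerSeries_sub_le {a : ℕ → ℝ} (ha_nonneg : ∀ j, 0 ≤ a j)
    (ha : Summable a) {ε : ℝ} (hε : 0 < ε) :
    ∃ δ > 0, ∀ (R : Type u) [NormedRing R] [NormedAlgebra ℂ R] [CompleteSpace R] (u v : R),
      ‖u‖ ≤ 1 → ‖v‖ ≤ 1 → ‖u - v‖ ≤ δ → ‖oddPowerSeries a u - oddPowerSeries a v‖ ≤ ε := by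
  obtain ⟨N, hN⟩ : ∃ N, ∑' j, a (j + N) < ε / 4 :=
    ((tendsto_sum_nat_add a).eventually_lt_const (by positivity)).exists
  set K := ∑ j ∈ Finset.range N, a j * (2 * j + 1)
  have hK : 0 ≤ K := Finset.sum_nonneg fun j _ => mul_nonneg (ha_nonneg j) (by positivity)
  refine ⟨ε / (2 * (K + 1)), by positivity, fun R _ _ _ u v hu hv huv => ?_⟩
  calc ‖oddPowerSeries a u - oddPowerSeries a v‖
      ≤ K * ‖u - v‖ + 2 * ∑' j, a (j + N) := norm_oddPowerSeries_sub_le ha_nonneg ha hu hv N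
    _ ≤ K * (ε / (2 * (K + 1))) + 2 * (ε / 4) := by gcongr
    _ ≤ ε := by
        have : K * (ε / (2 * (K + 1))) ≤ ε / 2 := by
          rw [mul_div_assoc', div_le_div_iff₀ (by positivity) two_pos]
          nlinarith
        linarith

/-- For all `ε > 0` there is some `δ > 0`, uniform over all complex Banach spaces, such that
whenever `A` and `B` are bounded operators satisfying `‖sin A‖ ≤ 1 − δ`, `‖sin B‖ ≤ 1`,
`Arcsin(sin A) = A`, `Arcsin(sin B) = B` and `‖sin A − sin B‖ ≤ δ`, then `‖A − B‖ ≤ ε`. -/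
theorem opArcsin_opSin_uniform_continuity :
    ∀ ε : ℝ, 0 < ε → ∃ δ : ℝ, 0 < δ ∧
      ∀ (E : Type u) [NormedAddCommGroup E] [NormedSpace ℂ E] [CompleteSpace E]
        (A B : E →L[ℂ] E),
        ‖opSin A‖ ≤ 1 - δ → ‖opSin B‖ ≤ 1 →
        opArcsin (opSin A) = A → opArcsin (opSin B) = B →
        ‖opSin A - opSin B‖ ≤ δ → ‖A - B‖ ≤ ε := by
  intro ε hε
  obtain ⟨δ, hδ, hcont⟩ :=
    exists_pos_norm_oddPowerSeries_sub_le arcsinCoeff_nonneg summable_arcsinCoeff hε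
  refine ⟨δ, hδ, fun E _ _ _ A B hA hB hArcA hArcB hAB => ?_⟩
  rw [← hArcA, ← hArcB]
  exact hcont (E →L[ℂ] E) _ _ (hA.trans (by linarith)) hB hAB
end
end

section
/- Let X be a Banach space, let 𝓙 ⊆ 𝓛(X) be a two-sided ideal of the ring 𝓛(X), and let P ∈ 𝓛(X) be a bounded linear projection (P² = P) whose range E is a closed subspace of X. Suppose there is an isomorphism Φ from X onto E with ‖Φ‖·‖Φ⁻¹‖ ≤ C, and suppose 𝓙 contains an operator T with ‖T − P‖ < (C‖P‖)⁻¹. Then 𝓙 = 𝓛(X). -/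
/-!
Compress `T` to the range `E` of `P` and transport it back to `X` through `Φ`: with
`l = Φ⁻¹ ∘ P` and `r = Φ` one has `l P r = 1`, while `l T r ∈ 𝓙` lies within
`‖Φ⁻¹‖ ‖P‖ ‖T - P‖ ‖Φ‖ ≤ C ‖P‖ ‖T - P‖ < 1` of the identity. A Neumann series makes it
invertible, so `𝓙` contains a unit.
-/

namespace TwoSidedIdeal

variable {R : Type*}

theorem eq_top_of_isUnit_mem [Ring R] (I : TwoSidedIdeal R) {a : R} (ha : a ∈ I)
    (hunit : IsUnit a) : I = ⊤ := by
  obtain ⟨u, rfl⟩ := hunit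
  exact I.eq_top (by simpa using I.mul_mem_left (↑u⁻¹ : R) _ ha)

theorem eq_top_of_norm_sub_lt [NormedRing R] [HasSummableGeomSeries R] (I : TwoSidedIdeal R)
    {l p r t : R} (hlpr : l * p * r = 1) (ht : t ∈ I) (hnorm : ‖l‖ * ‖t - p‖ * ‖r‖ < 1) :
    I = ⊤ := by
  have hmem : l * t * r ∈ I := I.mul_mem_right _ _ (I.mul_mem_left _ _ ht)
  have hdist : ‖1 - l * t * r‖ < 1 := calc
    ‖1 - l * t * r‖ = ‖l * (p - t) * r‖ := by rw [← hlpr]; noncomm_ring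
    _ ≤ ‖l‖ * ‖p - t‖ * ‖r‖ := norm_mul₃_le
    _ < 1 := by rwa [norm_sub_rev]
  exact I.eq_top_of_isUnit_mem hmem (by simpa using isUnit_one_sub_of_norm_lt_one hdist)

end TwoSidedIdeal

namespace ContinuousLinearMap

variable {𝕜 X : Type*} [NontriviallyNormedField 𝕜] [NormedAddCommGroup X] [NormedSpace 𝕜 X]

theorem apply_eq_self_of_mem_range {P : X →L[𝕜] X} (hP : P ∘L P = P) {x : X}
    (hx : x ∈ LinearMap.range (P : X →ₗ[𝕜] X)) : P x = x := by
  obtain ⟨y, rfl⟩ := hx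
  exact congr($hP y)

theorem exists_mul_mul_eq_one_of_equiv_range {P : X →L[𝕜] X} (hP : P ∘L P = P)
    (Φ : X ≃L[𝕜] LinearMap.range (P : X →ₗ[𝕜] X)) :
    ∃ l r : X →L[𝕜] X, l * P * r = 1 ∧
      ‖l‖ ≤ ‖(Φ.symm : LinearMap.range (P : X →ₗ[𝕜] X) →L[𝕜] X)‖ * ‖P‖ ∧
      ‖r‖ ≤ ‖(Φ : X →L[𝕜] LinearMap.range (P : X →ₗ[𝕜] X))‖ := by
  let P' := P.codRestrict (LinearMap.range (P : X →ₗ[𝕜] X)) (LinearMap.mem_range_self _)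
  refine ⟨(Φ.symm : _ →L[𝕜] X) ∘L P',
    Submodule.subtypeL _ ∘L (Φ : X →L[𝕜] LinearMap.range (P : X →ₗ[𝕜] X)), ?_, ?_, ?_⟩
  · ext x
    have hfix : P' (P (Φ x)) = Φ x := by
      ext
      simp only [P', coe_codRestrict_apply]
      rw [apply_eq_self_of_mem_range hP (Φ x).2, apply_eq_self_of_mem_range hP (Φ x).2]
    simp [hfix]
  · exact (opNorm_comp_le _ _).trans
      (by gcongr; exact opNorm_le_bound _ (norm_nonneg P) P.le_opNorm)
  · exact (opNorm_comp_le _ _).trans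
      (mul_le_of_le_one_left (norm_nonneg _) (Submodule.norm_subtypeL_le _))

end ContinuousLinearMap

theorem twoSidedIdeal_eq_top_of_near_projection_general
    (X : Type*) [NormedAddCommGroup X] [NormedSpace ℂ X] [CompleteSpace X]
    (𝓙 : TwoSidedIdeal (X →L[ℂ] X))
    (P : X →L[ℂ] X) (hproj : P ∘L P = P)
    (C : ℝ)
    (Φ : X ≃L[ℂ] LinearMap.range (P : X →ₗ[ℂ] X))
    (hC : ‖(Φ : X →L[ℂ] LinearMap.range (P : X →ₗ[ℂ] X))‖ * ‖(Φ.symm : LinearMap.range (P : X →ₗ[ℂ] X) →L[ℂ] X)‖ ≤ C)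
    (T : X →L[ℂ] X) (hTJ : T ∈ 𝓙)
    (hTP : ‖T - P‖ < (C * ‖P‖)⁻¹) :
    𝓙 = ⊤ := by
  obtain ⟨l, r, hlpr, hl, hr⟩ :=
    ContinuousLinearMap.exists_mul_mul_eq_one_of_equiv_range hproj Φ
  have hCP : 0 < C * ‖P‖ := inv_pos.1 ((norm_nonneg _).trans_lt hTP)
  refine 𝓙.eq_top_of_norm_sub_lt hlpr hTJ ?_
  calc ‖l‖ * ‖T - P‖ * ‖r‖
      ≤ ‖(Φ.symm : LinearMap.range (P : X →ₗ[ℂ] X) →L[ℂ] X)‖ * ‖P‖ * ‖T - P‖ *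
          ‖(Φ : X →L[ℂ] LinearMap.range (P : X →ₗ[ℂ] X))‖ := by gcongr
    _ = ‖(Φ : X →L[ℂ] LinearMap.range (P : X →ₗ[ℂ] X))‖ *
          ‖(Φ.symm : LinearMap.range (P : X →ₗ[ℂ] X) →L[ℂ] X)‖ * ‖P‖ * ‖T - P‖ := by ring
    _ ≤ C * ‖P‖ * ‖T - P‖ := by gcongr
    _ < 1 := (lt_inv_mul_iff₀ hCP).1 (by rwa [mul_one])

/-- If a two-sided ideal `𝓙` of `𝓛(X)` contains an operator `T` with `‖T − P‖ < (C‖P‖)⁻¹`,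
where `P` is a bounded projection whose range is `C`-isomorphic to `X`, then `𝓙 = 𝓛(X)`. -/
theorem twoSidedIdeal_eq_top_of_near_projection
    (X : Type*) [NormedAddCommGroup X] [NormedSpace ℂ X] [CompleteSpace X]
    (𝓙 : TwoSidedIdeal (X →L[ℂ] X))
    (P : X →L[ℂ] X) (hproj : P ∘L P = P)
    (hclosed : IsClosed (LinearMap.range (P : X →ₗ[ℂ] X) : Set X))
    (C : ℝ)
    (Φ : X ≃L[ℂ] LinearMap.range (P : X →ₗ[ℂ] X))
    (hC : ‖(Φ : X →L[ℂ] LinearMap.range (P : X →ₗ[ℂ] X))‖ * ‖(Φ.symm : LinearMap.range (P : X →ₗ[ℂ] X) →L[ℂ] X)‖ ≤ C)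
    (T : X →L[ℂ] X) (hTJ : T ∈ 𝓙)
    (hTP : ‖T - P‖ < (C * ‖P‖)⁻¹) :
    𝓙 = ⊤ :=
  twoSidedIdeal_eq_top_of_near_projection_general X 𝓙 P hproj C Φ hC T hTJ hTP
end

section
/- Let φ : [0,1] → [0,1] be a Lebesgue-measurable map such that the set {ω ∈ [0,1] : φ(ω) ≠ ω} has positive Lebesgue measure. Then there exists a compact set A ⊆ [0,1] of positive Lebesgue measure such that φ(A) ∩ A = ∅. -/
open MeasureTheory
open scoped ENNReal unitInterval

noncomputable section

/-- If `φ : [0,1] → [0,1]` is measurable and `{ω : φ(ω) ≠ ω}` has positive Lebesgue measure,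
then there is a compact set `A ⊆ [0,1]` of positive measure with `φ(A) ∩ A = ∅`. -/
theorem exists_compact_disjoint_image
    (φ : I → I) (hφ : Measurable φ)
    (h : 0 < volume {ω : I | φ ω ≠ ω}) :
    ∃ A : Set I, IsCompact A ∧ 0 < volume A ∧ φ '' A ∩ A = ∅ := by
  classical
  have hf : Measurable (fun ω : I => (φ ω : ℝ)) := continuous_subtype_val.measurable.comp hφ
  have hid : Measurable (fun ω : I => (ω : ℝ)) := continuous_subtype_val.measurable
  set S : ℚ × ℚ → Set I := fun pq =>
    {ω | (φ ω : ℝ) < pq.1 ∧ (pq.1 : ℝ) ≤ pq.2 ∧ (pq.2 : ℝ) < ω} ∪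
    {ω | (ω : ℝ) < pq.1 ∧ (pq.1 : ℝ) ≤ pq.2 ∧ (pq.2 : ℝ) < φ ω} with hS
  have hSmeas : ∀ pq, MeasurableSet (S pq) := by
    intro pq
    apply MeasurableSet.union
    · exact (hf measurableSet_Iio).inter ((MeasurableSet.const _).inter (hid measurableSet_Ioi))
    · exact (hid measurableSet_Iio).inter ((MeasurableSet.const _).inter (hf measurableSet_Ioi))
  have hcover : {ω : I | φ ω ≠ ω} ⊆ ⋃ pq, S pq := by
    intro ω hω
    have hne : (φ ω : ℝ) ≠ (ω : ℝ) := fun hh => hω (Subtype.ext hh)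
    rcases lt_or_gt_of_ne hne with h1 | h1
    · obtain ⟨p, hp1, hp2⟩ := exists_rat_btwn h1
      obtain ⟨q, hq1, hq2⟩ := exists_rat_btwn hp2
      exact Set.mem_iUnion.2 ⟨(p, q), Or.inl ⟨hp1, by exact_mod_cast hq1.le, hq2⟩⟩
    · obtain ⟨p, hp1, hp2⟩ := exists_rat_btwn h1
      obtain ⟨q, hq1, hq2⟩ := exists_rat_btwn hp1
      exact Set.mem_iUnion.2 ⟨(q, p), Or.inr ⟨hq1, by exact_mod_cast hq2.le, hp2⟩⟩
  have hpos : 0 < volume (⋃ pq, S pq) := lt_of_lt_of_le h (measure_mono hcover)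
  obtain ⟨pq, hpq⟩ : ∃ pq, 0 < volume (S pq) := by
    by_contra hc
    push_neg at hc
    simp only [nonpos_iff_eq_zero] at hc
    exact absurd (measure_iUnion_null hc) hpos.ne'
  -- one half has positive measure
  set B1 : Set I := {ω | (φ ω : ℝ) < pq.1 ∧ (pq.1 : ℝ) ≤ pq.2 ∧ (pq.2 : ℝ) < ω}
  set B2 : Set I := {ω | (ω : ℝ) < pq.1 ∧ (pq.1 : ℝ) ≤ pq.2 ∧ (pq.2 : ℝ) < φ ω}
  have hB1m : MeasurableSet B1 :=
    (hf measurableSet_Iio).inter ((MeasurableSet.const _).inter (hid measurableSet_Ioi))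
  have hB2m : MeasurableSet B2 :=
    (hid measurableSet_Iio).inter ((MeasurableSet.const _).inter (hf measurableSet_Ioi))
  have hBpos : 0 < volume B1 ∨ 0 < volume B2 := by
    by_contra hc
    push_neg at hc
    simp only [nonpos_iff_eq_zero] at hc
    have : volume (S pq) = 0 := measure_union_null hc.1 hc.2
    exact absurd this hpq.ne'
  -- helper to extract compact subset of positive measure
  have extract : ∀ B : Set I, MeasurableSet B → 0 < volume B →
      ∃ K ⊆ B, IsCompact K ∧ 0 < volume K := by
    intro B hBm hBpos
    have hfin : volume B ≠ ∞ := (measure_lt_top _ _).ne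
    obtain ⟨K, hKB, hKc, hK⟩ := hBm.exists_isCompact_lt_add hfin hBpos.ne'
    refine ⟨K, hKB, hKc, ?_⟩
    by_contra hc
    push_neg at hc
    simp only [nonpos_iff_eq_zero] at hc
    rw [hc, zero_add] at hK
    exact lt_irrefl _ hK
  rcases hBpos with hB | hB
  · obtain ⟨K, hKB, hKc, hKpos⟩ := extract B1 hB1m hB
    refine ⟨K, hKc, hKpos, ?_⟩
    ext x
    simp only [Set.mem_inter_iff, Set.mem_image, Set.mem_empty_iff_false, iff_false]
    rintro ⟨⟨ω, hω, rfl⟩, hx⟩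
    have h1 : (φ ω : ℝ) < pq.1 := (hKB hω).1
    have h2 : (pq.2 : ℝ) < φ ω := (hKB hx).2.2
    have h3 : (pq.1 : ℝ) ≤ pq.2 := (hKB hω).2.1
    linarith
  · obtain ⟨K, hKB, hKc, hKpos⟩ := extract B2 hB2m hB
    refine ⟨K, hKc, hKpos, ?_⟩
    ext x
    simp only [Set.mem_inter_iff, Set.mem_image, Set.mem_empty_iff_false, iff_false]
    rintro ⟨⟨ω, hω, rfl⟩, hx⟩
    have h1 : (pq.2 : ℝ) < φ ω := (hKB hω).2.2
    have h2 : (φ ω : ℝ) < pq.1 := (hKB hx).1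
    have h3 : (pq.1 : ℝ) ≤ pq.2 := (hKB hx).2.1
    linarith
end
end
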